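/- Let X be a topological space and let (μ_n) be a sequence of Borel probability measures on X satisfying the large deviations principle with rate function J (lower semicontinuous, not assumed to have compact sublevel sets). Let φ : X → ℝ be upper semicontinuous and suppose the tail condition lim_{M→∞} limsup_{n→∞} (1/n) log ∫_X e^{n φ(x)} 1{φ(x) > M} μ_n(dx) ≤ sup_{x∈X} [φ(x) − J(x)] holds. Then limsup_{n→∞} (1/n) log ∫_X e^{n φ(x)} μ_n(dx) ≤ sup_{x∈X} [φ(x) − J(x)]. -/

import Mathlib

open MeasureTheory Filter Topology ENNReal

/-!
Fix reals `r > sup (φ - J)` and `δ > 0`, and a level `M`. Below `M` the space is covered by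
`{φ < r}` and finitely many closed sets `{φ ≥ r + k δ}`, the `k`-th carrying the weight
`e^{n (r + (k + 1) δ)}`. On `{φ ≥ a}` we have `J ≥ a - r`, so the LDP upper bound makes the
`k`-th piece grow at exponential rate at most `r + δ`, and so does the piece `{φ < r}` because
`J ≥ 0`. The rate of a finite sum is the maximum of the rates, so the integral grows at rate at
most `max (tail rate at M, r + δ)`; the tail condition makes the first term `< r` for a suitable
`M`, and letting `δ → 0` and `r ↓ sup (φ - J)` concludes.
-/

open ExpGrowth

lemma limsup_inv_mul_log_eq_expGrowthSup (u : ℕ → ℝ≥0∞) :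
    limsup (fun n : ℕ => ((n : ℝ)⁻¹ : EReal) * ENNReal.log (u n)) atTop
      = expGrowthSup u := by
  refine limsup_congr (Eventually.of_forall fun n => ?_)
  rw [EReal.coe_natCast, mul_comm, div_eq_mul_inv]

lemma expGrowthSup_ofReal_exp_mul_le (a : ℝ) (u : ℕ → ℝ≥0∞) :
    expGrowthSup (fun n : ℕ => ENNReal.ofReal (Real.exp (a * n)) * u n)
      ≤ a + expGrowthSup u := by
  have hexp : expGrowthSup (fun n : ℕ => ENNReal.ofReal (Real.exp (a * n))) = a := by
    convert expGrowthSup_exp (a := (a : EReal)) using 3 with n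
    rw [← EReal.coe_natCast, ← EReal.coe_mul, EReal.exp_coe]
  exact hexp ▸ expGrowthSup_mul_le (.inl (hexp ▸ EReal.coe_ne_bot a))
    (.inl (hexp ▸ EReal.coe_ne_top a))

lemma exists_nat_lt_mem_Icc {r δ M t : ℝ} {N : ℕ} (hδ : 0 < δ) (hN : M < r + N * δ)
    (hrt : r ≤ t) (htM : t ≤ M) :
    ∃ k < N, t ∈ Set.Icc (r + k * δ) (r + (k + 1) * δ) := by
  have hq : 0 ≤ (t - r) / δ := div_nonneg (sub_nonneg.2 hrt) hδ.le
  refine ⟨⌊(t - r) / δ⌋₊, (Nat.floor_lt hq).2 ((div_lt_iff₀ hδ).2 (by linarith)), ?_, ?_⟩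
  · have := (le_div_iff₀ hδ).1 (Nat.floor_le hq)
    linarith
  · have := (div_lt_iff₀ hδ).1 (Nat.lt_floor_add_one ((t - r) / δ))
    linarith

section Slices

variable {X : Type*} {φ : X → ℝ} {r δ M : ℝ} {N : ℕ}

lemma ofReal_exp_le_tail_add_slices (hδ : 0 < δ) (hN : M < r + N * δ) (n : ℕ) (x : X) :
    ENNReal.ofReal (Real.exp (n * φ x)) ≤
      {x | M < φ x}.indicator (fun x => ENNReal.ofReal (Real.exp (n * φ x))) x
        + ENNReal.ofReal (Real.exp (r * n))
        + ∑ k ∈ Finset.range N, (φ ⁻¹' Set.Ici (r + k * δ)).indicator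
            (fun _ => ENNReal.ofReal (Real.exp ((r + (k + 1) * δ) * n))) x := by
  rcases lt_or_ge M (φ x) with hM | hM
  · rw [Set.indicator_of_mem (show x ∈ {x | M < φ x} from hM)]
    exact le_self_add.trans le_self_add
  rcases lt_or_ge (φ x) r with hr | hr
  · refine le_trans ?_ (le_add_self.trans le_self_add)
    rw [mul_comm]
    gcongr
  obtain ⟨k, hk, hlo, hhi⟩ := exists_nat_lt_mem_Icc hδ hN hr hM
  calc ENNReal.ofReal (Real.exp (n * φ x))
      ≤ (φ ⁻¹' Set.Ici (r + k * δ)).indicator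
          (fun _ => ENNReal.ofReal (Real.exp ((r + (k + 1) * δ) * n))) x := by
        rw [Set.indicator_of_mem (show x ∈ φ ⁻¹' Set.Ici (r + k * δ) from hlo), mul_comm]
        gcongr
    _ ≤ ∑ k ∈ Finset.range N, (φ ⁻¹' Set.Ici (r + k * δ)).indicator
          (fun _ => ENNReal.ofReal (Real.exp ((r + (k + 1) * δ) * n))) x :=
        Finset.single_le_sum (f := fun k : ℕ => (φ ⁻¹' Set.Ici (r + k * δ)).indicator
          (fun _ => ENNReal.ofReal (Real.exp ((r + (k + 1) * δ) * n))) x)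
          (fun _ _ => zero_le) (Finset.mem_range.2 hk)
    _ ≤ _ := le_add_self

lemma lintegral_exp_le_tail_add_slices [MeasurableSpace X] (μ : Measure X) (hφ : Measurable φ)
    (hδ : 0 < δ) (hN : M < r + N * δ) (n : ℕ) :
    ∫⁻ x, ENNReal.ofReal (Real.exp (n * φ x)) ∂μ ≤
      ∫⁻ x in {x | M < φ x}, ENNReal.ofReal (Real.exp (n * φ x)) ∂μ
        + ENNReal.ofReal (Real.exp (r * n)) * μ Set.univ
        + ∑ k ∈ Finset.range N, ENNReal.ofReal (Real.exp ((r + (k + 1) * δ) * n))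
            * μ (φ ⁻¹' Set.Ici (r + k * δ)) := by
  have hslice (k : ℕ) : MeasurableSet (φ ⁻¹' Set.Ici (r + k * δ)) := hφ measurableSet_Ici
  refine (lintegral_mono (ofReal_exp_le_tail_add_slices hδ hN n)).trans_eq ?_
  rw [lintegral_add_right _ (Finset.measurable_sum _ fun k _ =>
      measurable_const.indicator (hslice k)),
    lintegral_add_right _ measurable_const,
    lintegral_indicator (measurableSet_lt measurable_const hφ), lintegral_const,
    lintegral_finsetSum _ fun k _ => measurable_const.indicator (hslice k)]
  simp only [lintegral_indicator_const (hslice _)]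

end Slices

lemma neg_iInf_le_of_forall_sub_le {X : Type*} {φ : X → ℝ} {J : X → ℝ≥0∞} {r a : ℝ}
    (hr : ∀ x, (φ x : EReal) - J x ≤ r) {F : Set X} (hF : ∀ x ∈ F, a ≤ φ x) :
    -(⨅ x ∈ F, (J x : EReal)) ≤ ((r - a : ℝ) : EReal) := by
  refine EReal.neg_le.2 (le_iInf₂ fun x hx => ?_)
  have hφJ := (EReal.sub_le_iff_le_add (.inr (EReal.coe_ne_top r))
    (.inr (EReal.coe_ne_bot r))).1 (hr x)
  rw [← EReal.coe_neg, neg_sub, EReal.coe_sub,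
    EReal.sub_le_iff_le_add (.inl (EReal.coe_ne_bot r)) (.inl (EReal.coe_ne_top r)), add_comm]
  exact (EReal.coe_le_coe_iff.2 (hF x hx)).trans hφJ

lemma expGrowthSup_ofReal_exp_mul_measure_Ici_le {X : Type*} [TopologicalSpace X]
    [MeasurableSpace X] (μ : ℕ → Measure X) (J : X → ℝ≥0∞)
    (hub : ∀ F : Set X, IsClosed F →
      expGrowthSup (fun n => μ n F) ≤ -(⨅ x ∈ F, (J x : EReal)))
    {φ : X → ℝ} (hφ : UpperSemicontinuous φ) {r : ℝ}
    (hr : ∀ x, (φ x : EReal) - J x ≤ r) (a b : ℝ) :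
    expGrowthSup (fun n : ℕ => ENNReal.ofReal (Real.exp (b * n)) * μ n (φ ⁻¹' Set.Ici a))
      ≤ ((b + (r - a) : ℝ) : EReal) :=
  calc _ ≤ (b : EReal) + expGrowthSup (fun n => μ n (φ ⁻¹' Set.Ici a)) :=
        expGrowthSup_ofReal_exp_mul_le b _
    _ ≤ (b : EReal) + ((r - a : ℝ) : EReal) := by
        gcongr
        exact (hub _ (hφ.isClosed_preimage a)).trans
          (neg_iInf_le_of_forall_sub_le hr fun x hx => hx)
    _ = _ := (EReal.coe_add b (r - a)).symm

lemma expGrowthSup_lintegral_exp_le {X : Type*} [TopologicalSpace X] [MeasurableSpace X]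
    [OpensMeasurableSpace X] (μ : ℕ → Measure X) (J : X → ℝ≥0∞)
    (hub : ∀ F : Set X, IsClosed F →
      expGrowthSup (fun n => μ n F) ≤ -(⨅ x ∈ F, (J x : EReal)))
    {φ : X → ℝ} (hφ : UpperSemicontinuous φ) {r : ℝ}
    (hr : ∀ x, (φ x : EReal) - J x ≤ r)
    {δ : ℝ} (hδ : 0 < δ) (M : ℝ) :
    expGrowthSup (fun n => ∫⁻ x, ENNReal.ofReal (Real.exp (n * φ x)) ∂μ n) ≤
      max (expGrowthSup fun n =>
          ∫⁻ x in {x | M < φ x}, ENNReal.ofReal (Real.exp (n * φ x)) ∂μ n)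
        ((r + δ : ℝ) : EReal) := by
  obtain ⟨N, hN⟩ := exists_nat_gt ((M - r) / δ)
  have hMN : M < r + N * δ := by
    rw [div_lt_iff₀ hδ] at hN
    linarith
  have hbottom : expGrowthSup (fun n : ℕ => ENNReal.ofReal (Real.exp (r * n)) * μ n Set.univ)
      ≤ ((r + δ : ℝ) : EReal) :=
    calc _ ≤ (r : EReal) + expGrowthSup (fun n => μ n Set.univ) :=
          expGrowthSup_ofReal_exp_mul_le r _
      _ ≤ (r : EReal) + 0 := by
          gcongr
          refine (hub _ isClosed_univ).trans (EReal.neg_le.2 (le_iInf₂ fun x _ => ?_))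
          rw [neg_zero]
          exact EReal.coe_ennreal_nonneg _
      _ ≤ _ := by
          rw [add_zero]
          exact_mod_cast (lt_add_of_pos_right r hδ).le
  have hslice (k : ℕ) : expGrowthSup (fun n : ℕ =>
      ENNReal.ofReal (Real.exp ((r + (k + 1) * δ) * n)) * μ n (φ ⁻¹' Set.Ici (r + k * δ)))
      ≤ ((r + δ : ℝ) : EReal) :=
    (expGrowthSup_ofReal_exp_mul_measure_Ici_le μ J hub hφ hr _ _).trans_eq (by ring_nf)
  calc _ ≤ expGrowthSup
        ((fun n => ∫⁻ x in {x | M < φ x}, ENNReal.ofReal (Real.exp (n * φ x)) ∂μ n)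
          + (fun n : ℕ => ENNReal.ofReal (Real.exp (r * n)) * μ n Set.univ)
          + ∑ k ∈ Finset.range N, fun n : ℕ => ENNReal.ofReal (Real.exp ((r + (k + 1) * δ) * n))
              * μ n (φ ⁻¹' Set.Ici (r + k * δ))) := by
        refine expGrowthSup_monotone fun n => ?_
        simp only [Pi.add_apply, Finset.sum_apply]
        exact lintegral_exp_le_tail_add_slices (μ n) hφ.measurable hδ hMN n
    _ ≤ _ := by
        rw [expGrowthSup_add, expGrowthSup_add, expGrowthSup_sum]
        exact sup_le (sup_le le_sup_left (hbottom.trans le_sup_right))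
          ((iSup₂_le fun k _ => hslice k).trans le_sup_right)

theorem varadhan_upper_of_tail_general
    {X : Type*} [TopologicalSpace X] [MeasurableSpace X] [BorelSpace X]
    (μ : ℕ → Measure X)
    (J : X → ℝ≥0∞)
    (hub : ∀ F : Set X, IsClosed F →
      Filter.limsup (fun n : ℕ => ((n : ℝ)⁻¹ : EReal) * ENNReal.log (μ n F)) Filter.atTop
        ≤ -(⨅ x ∈ F, (J x : EReal)))
    (φ : X → ℝ) (hφ : UpperSemicontinuous φ)
    (htail : Filter.limsup (fun M : ℝ =>
        Filter.limsup (fun n : ℕ => ((n : ℝ)⁻¹ : EReal) *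
          ENNReal.log (∫⁻ x in {x | M < φ x}, ENNReal.ofReal (Real.exp (n * φ x)) ∂ μ n))
          Filter.atTop) Filter.atTop
      ≤ ⨆ x, ((φ x : EReal) - (J x : EReal))) :
    Filter.limsup (fun n : ℕ => ((n : ℝ)⁻¹ : EReal) *
        ENNReal.log (∫⁻ x, ENNReal.ofReal (Real.exp (n * φ x)) ∂ μ n)) Filter.atTop
      ≤ ⨆ x, ((φ x : EReal) - (J x : EReal)) := by
  simp only [limsup_inv_mul_log_eq_expGrowthSup] at hub htail ⊢
  refine EReal.le_of_forall_lt_iff_le.1 fun r hr => EReal.le_of_forall_lt_iff_le.1 fun z hz => ?_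
  have hφJ (x : X) : (φ x : EReal) - J x ≤ r :=
    (le_iSup (fun x => (φ x : EReal) - J x) x).trans hr.le
  obtain ⟨M, hM⟩ := (eventually_lt_of_limsup_lt (htail.trans_lt hr)).exists
  have hrz : 0 < z - r := sub_pos.2 (EReal.coe_lt_coe_iff.1 hz)
  refine (expGrowthSup_lintegral_exp_le μ J hub hφ hφJ hrz M).trans (max_le (hM.trans hz).le ?_)
  rw [add_sub_cancel]

/-- Varadhan's upper bound without goodness of the rate function: for an upper
semicontinuous integrand `φ`, the tail condition implies the upper bound. -/
theorem varadhan_upper_of_tail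
    {X : Type*} [TopologicalSpace X] [MeasurableSpace X] [BorelSpace X]
    (μ : ℕ → Measure X) [∀ n, IsProbabilityMeasure (μ n)]
    (J : X → ℝ≥0∞) (hJ : LowerSemicontinuous J)
    (hub : ∀ F : Set X, IsClosed F →
      Filter.limsup (fun n : ℕ => ((n : ℝ)⁻¹ : EReal) * ENNReal.log (μ n F)) Filter.atTop
        ≤ -(⨅ x ∈ F, (J x : EReal)))
    (hlb : ∀ G : Set X, IsOpen G →
      -(⨅ x ∈ G, (J x : EReal)) ≤
        Filter.liminf (fun n : ℕ => ((n : ℝ)⁻¹ : EReal) * ENNReal.log (μ n G)) Filter.atTop)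
    (φ : X → ℝ) (hφ : UpperSemicontinuous φ)
    (htail : Filter.limsup (fun M : ℝ =>
        Filter.limsup (fun n : ℕ => ((n : ℝ)⁻¹ : EReal) *
          ENNReal.log (∫⁻ x in {x | M < φ x}, ENNReal.ofReal (Real.exp (n * φ x)) ∂ μ n))
          Filter.atTop) Filter.atTop
      ≤ ⨆ x, ((φ x : EReal) - (J x : EReal))) :
    Filter.limsup (fun n : ℕ => ((n : ℝ)⁻¹ : EReal) *
        ENNReal.log (∫⁻ x, ENNReal.ofReal (Real.exp (n * φ x)) ∂ μ n)) Filter.atTop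
      ≤ ⨆ x, ((φ x : EReal) - (J x : EReal)) :=
  varadhan_upper_of_tail_general μ J hub φ hφ htail
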